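/- arXiv:2001.03885 — 5 statements merged into one kernel-verified Lean document; each statement's English description precedes it below -/
import Mathlib

section
/- Let V be a real Hilbert space and A ⊆ V a nonempty bounded set. Among all closed balls in V containing A there exists a unique one of minimal radius; i.e., there is a unique c ∈ V minimizing sup_{a ∈ A} ‖c - a‖ (the Chebyshev center of A). -/
/-- Lemma of the center: a nonempty bounded subset of a real Hilbert space has a unique
Chebyshev center, i.e. a unique point minimizing the radius
`r(c) = sup_{a ∈ A} ‖c - a‖` of a closed ball centered at `c` containing `A`. -/
theorem stmt_2 {V : Type*} [NormedAddCommGroup V] [InnerProductSpace ℝ V] [CompleteSpace V]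
    (A : Set V) (hne : A.Nonempty) (hbdd : Bornology.IsBounded A) :
    ∃! c : V, ∀ d : V,
      sSup ((fun a => ‖c - a‖) '' A) ≤ sSup ((fun a => ‖d - a‖) '' A) := by
  classical
  obtain ⟨M, hM⟩ := (isBounded_iff_forall_norm_le).mp hbdd
  obtain ⟨a₀, ha₀⟩ := hne
  set r : V → ℝ := fun c => sSup ((fun a => ‖c - a‖) '' A) with hrdef
  have hbdda : ∀ c : V, BddAbove ((fun a => ‖c - a‖) '' A) := by
    intro c
    refine ⟨‖c‖ + M, ?_⟩
    rintro x ⟨a, ha, rfl⟩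
    calc ‖c - a‖ ≤ ‖c‖ + ‖a‖ := norm_sub_le _ _
      _ ≤ ‖c‖ + M := by linarith [hM a ha]
  have hle : ∀ c a, a ∈ A → ‖c - a‖ ≤ r c := fun c a ha =>
    le_csSup (hbdda c) ⟨a, ha, rfl⟩
  have hsup_le : ∀ c x, (∀ a ∈ A, ‖c - a‖ ≤ x) → r c ≤ x := by
    intro c x h
    exact csSup_le ((Set.nonempty_of_mem ha₀).image _) (by rintro y ⟨a, ha, rfl⟩; exact h a ha)
  have hr0 : ∀ c, 0 ≤ r c := fun c => le_trans (norm_nonneg _) (hle c a₀ ha₀)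
  have hbdb : BddBelow (Set.range r) := ⟨0, by rintro y ⟨c, rfl⟩; exact hr0 c⟩
  set R : ℝ := ⨅ c, r c with hRdef
  have hR0 : 0 ≤ R := le_ciInf hr0
  have hRle : ∀ c, R ≤ r c := fun c => ciInf_le hbdb c
  -- key inequality via the parallelogram law
  have key : ∀ c d : V, ‖c - d‖ ^ 2 ≤ 2 * (r c ^ 2 + r d ^ 2) - 4 * R ^ 2 := by
    intro c d
    set m : V := (2 : ℝ)⁻¹ • (c + d) with hm
    have hmid : ∀ a ∈ A, ‖m - a‖ ^ 2 ≤ (r c ^ 2 + r d ^ 2) / 2 - ‖c - d‖ ^ 2 / 4 := by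
      intro a ha
      have hpar := parallelogram_law_with_norm ℝ (c - a) (d - a)
      have h1 : c - a + (d - a) = (2 : ℝ) • (m - a) := by
        rw [hm, smul_sub, smul_smul]
        norm_num
        module
      have h2 : c - a - (d - a) = c - d := by abel
      rw [h1, h2, norm_smul] at hpar
      have hca : ‖c - a‖ ^ 2 ≤ r c ^ 2 := pow_le_pow_left₀ (norm_nonneg _) (hle c a ha) 2
      have hda : ‖d - a‖ ^ 2 ≤ r d ^ 2 := pow_le_pow_left₀ (norm_nonneg _) (hle d a ha) 2
      have : ‖(2:ℝ)‖ = 2 := by norm_num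
      rw [this] at hpar
      nlinarith [hpar]
    set B : ℝ := (r c ^ 2 + r d ^ 2) / 2 - ‖c - d‖ ^ 2 / 4 with hB
    have hB0 : 0 ≤ B := le_trans (sq_nonneg ‖m - a₀‖) (hmid a₀ ha₀)
    have hrm : r m ≤ Real.sqrt B := by
      refine hsup_le m _ (fun a ha => ?_)
      have : ‖m - a‖ = Real.sqrt (‖m - a‖ ^ 2) := (Real.sqrt_sq (norm_nonneg _)).symm
      rw [this]
      exact Real.sqrt_le_sqrt (hmid a ha)
    have hRs : R ≤ Real.sqrt B := le_trans (hRle m) hrm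
    have hsq : Real.sqrt B ^ 2 = B := Real.sq_sqrt hB0
    have hR2 : R ^ 2 ≤ B := by nlinarith [mul_self_le_mul_self hR0 hRs, hsq]
    rw [hB] at hR2
    linarith
  -- Lipschitz property of r
  have hlip : ∀ x y : V, r x ≤ r y + ‖x - y‖ := by
    intro x y
    refine hsup_le x _ (fun a ha => ?_)
    calc ‖x - a‖ ≤ ‖x - y‖ + ‖y - a‖ := norm_sub_le_norm_sub_add_norm_sub x y a
      _ ≤ r y + ‖x - y‖ := by linarith [hle y a ha]
  -- minimizing sequence
  have hseq : ∀ n : ℕ, ∃ c : V, r c < R + 1 / (n + 1) := by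
    intro n
    have hpos : (0:ℝ) < 1 / (n + 1) := by positivity
    have : R < R + 1 / (n + 1) := by linarith
    exact exists_lt_of_ciInf_lt this
  choose c hc using hseq
  have hcau : CauchySeq c := by
    rw [Metric.cauchySeq_iff]
    intro ε hε
    set δ : ℝ := min 1 (ε ^ 2 / (4 * (2 * R + 1))) with hδ
    have hδ0 : 0 < δ := by
      apply lt_min one_pos
      positivity
    obtain ⟨N, hN⟩ := exists_nat_one_div_lt hδ0
    refine ⟨N, fun p hp q hq => ?_⟩
    have hrp : r (c p) < R + δ := by
      refine lt_of_lt_of_le (hc p) ?_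
      have h1 : (1:ℝ) / (p + 1) ≤ 1 / (N + 1) := by
        apply one_div_le_one_div_of_le (by positivity)
        exact_mod_cast by omega
      linarith [hN, h1]
    have hrq : r (c q) < R + δ := by
      refine lt_of_lt_of_le (hc q) ?_
      have h1 : (1:ℝ) / (q + 1) ≤ 1 / (N + 1) := by
        apply one_div_le_one_div_of_le (by positivity)
        exact_mod_cast by omega
      linarith [hN, h1]
    have hδ1 : δ ≤ 1 := min_le_left _ _
    have hδ2 : δ ≤ ε ^ 2 / (4 * (2 * R + 1)) := min_le_right _ _
    have hkey := key (c p) (c q)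
    have hsq : ‖c p - c q‖ ^ 2 < ε ^ 2 := by
      have h1 : r (c p) ^ 2 < R ^ 2 + (2 * R + 1) * δ := by nlinarith [hr0 (c p)]
      have h2 : r (c q) ^ 2 < R ^ 2 + (2 * R + 1) * δ := by nlinarith [hr0 (c q)]
      have h3 : (2 * R + 1) * δ ≤ ε ^ 2 / 4 := by
        rw [le_div_iff₀ (by positivity)] at hδ2
        nlinarith [hR0]
      nlinarith
    rw [dist_eq_norm]
    nlinarith [norm_nonneg (c p - c q), hε]
  obtain ⟨c₀, hlim⟩ := cauchySeq_tendsto_of_complete hcau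
  have hrc₀ : r c₀ ≤ R := by
    by_contra h
    push_neg at h
    set ε : ℝ := (r c₀ - R) / 2 with hε
    have hε0 : 0 < ε := by linarith
    rw [Metric.tendsto_atTop] at hlim
    obtain ⟨N₁, hN₁⟩ := hlim ε hε0
    obtain ⟨N₂, hN₂⟩ := exists_nat_one_div_lt hε0
    set n := max N₁ N₂ with hn
    have h1 : dist (c n) c₀ < ε := hN₁ n (le_max_left _ _)
    have h2 : (1:ℝ) / (n + 1) ≤ 1 / (N₂ + 1) := by
      apply one_div_le_one_div_of_le (by positivity)
      exact_mod_cast by omega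
    have h3 : r (c n) < R + ε := by linarith [hc n]
    have h4 : r c₀ ≤ r (c n) + ‖c₀ - c n‖ := hlip c₀ (c n)
    rw [dist_eq_norm, ← norm_neg] at h1
    have h5 : -(c n - c₀) = c₀ - c n := by abel
    rw [h5] at h1
    linarith
  refine ⟨c₀, fun d => le_trans hrc₀ (hRle d), ?_⟩
  intro d hd
  have h1 : r d ≤ R := le_trans (hd c₀) hrc₀
  have h2 : r d = R := le_antisymm h1 (hRle d)
  have h3 : r c₀ = R := le_antisymm hrc₀ (hRle c₀)
  have h4 := key d c₀
  rw [h2, h3] at h4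
  have h5 : ‖d - c₀‖ = 0 := by nlinarith [norm_nonneg (d - c₀)]
  have h6 : d - c₀ = 0 := norm_eq_zero.mp h5
  exact sub_eq_zero.mp h6
end

section
/- Let G be a finite reflection group acting on ℝ³ with fundamental chamber B (a closed fundamental domain bounded by the reflecting hyperplanes of the generating reflections). For every g ∈ G, every generating reflection R with unit normal n, and all x, y ∈ B: ⟨g x, n⟩ · ⟨g y, n⟩ ≥ 0. -/
open scoped RealInnerProductSpace

/-- Helper: if a convex set has an interior point `z` and a point `x` with
`0 < ⟪x, m⟫`, then it has an *interior* point with positive inner product with `m`. -/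
lemma stmt5_aux {E : Type*} [NormedAddCommGroup E] [InnerProductSpace ℝ E]
    {B : Set E} (hconv : Convex ℝ B) {z x m : E}
    (hz : z ∈ interior B) (hx : x ∈ B) (ha : 0 < ⟪x, m⟫) :
    ∃ p ∈ interior B, 0 < ⟪p, m⟫ := by
  set a : ℝ := ⟪x, m⟫ with hadef
  set c : ℝ := ⟪z, m⟫ with hcdef
  have hpos : (0:ℝ) < |c| + a := by positivity
  set t : ℝ := (|c| + a / 2) / (|c| + a) with htdef
  have ht0 : 0 ≤ t := by positivity
  have ht1 : t < 1 := by
    rw [htdef, div_lt_one hpos]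
    linarith
  have htkey : t * (|c| + a) = |c| + a / 2 := by
    rw [htdef, div_mul_cancel₀ _ (ne_of_gt hpos)]
  refine ⟨(1 - t) • z + t • x, ?_, ?_⟩
  · exact hconv.combo_interior_self_mem_interior hz hx (by linarith) ht0 (by ring)
  · have hinner : ⟪(1 - t) • z + t • x, m⟫ = (1 - t) * c + t * a := by
      rw [inner_add_left, real_inner_smul_left, real_inner_smul_left]
    rw [hinner]
    have hc : -|c| ≤ c := neg_abs_le c
    nlinarith [mul_nonneg ht0 (le_of_lt ha)]

/-- For a finite reflection group `G` on `ℝ³` with closed fundamental chamber `B`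
(the intersection of the half-spaces determined by the unit normals of the
generating reflections), no reflecting hyperplane of a generator separates `g x`
from `g y` when `x, y ∈ B`. -/
theorem stmt_5 {k : ℕ} (n : Fin k → EuclideanSpace ℝ (Fin 3))
    (hn : ∀ i, ‖n i‖ = 1)
    (G : Subgroup (EuclideanSpace ℝ (Fin 3) ≃ₗᵢ[ℝ] EuclideanSpace ℝ (Fin 3)))
    (hG : G = Subgroup.closure (Set.range fun i => Submodule.reflection (ℝ ∙ (n i))ᗮ))
    (hfin : Finite G)
    (B : Set (EuclideanSpace ℝ (Fin 3)))
    (hB : B = {x | ∀ i, 0 ≤ ⟪x, n i⟫})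
    (hcover : ⋃ g ∈ G, (g : EuclideanSpace ℝ (Fin 3) ≃ₗᵢ[ℝ] EuclideanSpace ℝ (Fin 3)) '' B
      = Set.univ)
    (hdisj : ∀ g ∈ G, g ≠ 1 →
      ((g : EuclideanSpace ℝ (Fin 3) ≃ₗᵢ[ℝ] EuclideanSpace ℝ (Fin 3)) '' interior B)
        ∩ interior B = ∅) :
    ∀ g ∈ G, ∀ i, ∀ x ∈ B, ∀ y ∈ B, 0 ≤ ⟪g x, n i⟫ * ⟪g y, n i⟫ := by
  have hE : True := trivial
  -- B is closed and convex
  have hBclosed : IsClosed B := by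
    rw [hB]
    have : {x : EuclideanSpace ℝ (Fin 3) | ∀ i, 0 ≤ ⟪x, n i⟫} = ⋂ i, {x : EuclideanSpace ℝ (Fin 3) | 0 ≤ ⟪x, n i⟫} := by
      ext x; simp
    rw [this]
    exact isClosed_iInter fun i =>
      isClosed_le continuous_const (Continuous.inner continuous_id continuous_const)
  have hBconv : Convex ℝ B := by
    rw [hB]
    have : {x : EuclideanSpace ℝ (Fin 3) | ∀ i, 0 ≤ ⟪x, n i⟫} = ⋂ i, {x : EuclideanSpace ℝ (Fin 3) | 0 ≤ ⟪x, n i⟫} := by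
      ext x; simp
    rw [this]
    exact convex_iInter fun i =>
      convex_halfSpace_ge ⟨fun a b => inner_add_left a b _,
        fun c v => real_inner_smul_left v _ c⟩ 0
  -- interior B is nonempty, by Baire
  have hint : (interior B).Nonempty := by
    have hcover' : ⋃ (g : G), ((g : EuclideanSpace ℝ (Fin 3) ≃ₗᵢ[ℝ] EuclideanSpace ℝ (Fin 3)) '' B) = Set.univ := by
      rw [← hcover]; ext v; simp
    obtain ⟨g, hg⟩ := nonempty_interior_of_iUnion_of_closed
      (f := fun g : G => ((g : EuclideanSpace ℝ (Fin 3) ≃ₗᵢ[ℝ] EuclideanSpace ℝ (Fin 3)) '' B))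
      (fun g => ((g : EuclideanSpace ℝ (Fin 3) ≃ₗᵢ[ℝ] EuclideanSpace ℝ (Fin 3)).toHomeomorph.isClosed_image).mpr hBclosed) hcover'
    obtain ⟨p, hp⟩ := hg
    have himg : (⇑(g : EuclideanSpace ℝ (Fin 3) ≃ₗᵢ[ℝ] EuclideanSpace ℝ (Fin 3))) '' interior B
        = interior ((⇑(g : EuclideanSpace ℝ (Fin 3) ≃ₗᵢ[ℝ] EuclideanSpace ℝ (Fin 3))) '' B) :=
      (g : EuclideanSpace ℝ (Fin 3) ≃ₗᵢ[ℝ] EuclideanSpace ℝ (Fin 3)).toHomeomorph.image_interior B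
    rw [← himg] at hp
    obtain ⟨q, hq, -⟩ := hp
    exact ⟨q, hq⟩
  obtain ⟨z, hz⟩ := hint
  intro g hg i x hx y hy
  set m : EuclideanSpace ℝ (Fin 3) := g.symm (n i) with hm
  have hgm : g m = n i := g.apply_symm_apply (n i)
  have hEq : ∀ v : EuclideanSpace ℝ (Fin 3), ⟪g v, n i⟫ = ⟪v, m⟫ := by
    intro v
    rw [← hgm, g.inner_map_map]
  rw [hEq x, hEq y]
  -- Key claim: B lies on one side of the hyperplane m^⊥
  have key : (∀ v ∈ B, 0 ≤ ⟪v, m⟫) ∨ (∀ v ∈ B, ⟪v, m⟫ ≤ 0) := by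
    by_contra h
    push_neg at h
    obtain ⟨⟨y0, hy0, hy0'⟩, ⟨x0, hx0, hx0'⟩⟩ := h
    -- find interior points with positive/negative inner product
    obtain ⟨p, hp, hp'⟩ := stmt5_aux hBconv hz hx0 hx0'
    obtain ⟨q, hq, hq'⟩ : ∃ q ∈ interior B, 0 < ⟪q, -m⟫ := by
      refine stmt5_aux hBconv hz hy0 ?_
      rw [inner_neg_right]; linarith
    rw [inner_neg_right] at hq'
    -- intermediate value: point w in interior B with ⟪w, m⟫ = 0
    set f : ℝ → ℝ := fun t => ⟪(1 - t) • p + t • q, m⟫ with hf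
    have hfc : Continuous f := by
      apply Continuous.inner _ continuous_const
      exact ((continuous_const.sub continuous_id).smul continuous_const).add
        (continuous_id.smul continuous_const)
    have hf0 : f 0 = ⟪p, m⟫ := by simp [hf]
    have hf1 : f 1 = ⟪q, m⟫ := by simp [hf]
    have hzero : (0:ℝ) ∈ Set.Icc (f 1) (f 0) := by
      rw [hf0, hf1]; constructor <;> linarith
    obtain ⟨t, ht, hft⟩ := intermediate_value_Icc' (by norm_num : (0:ℝ) ≤ 1)
      hfc.continuousOn hzero
    set w : EuclideanSpace ℝ (Fin 3) := (1 - t) • p + t • q with hw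
    have hwint : w ∈ interior B :=
      hBconv.interior hp hq (by linarith [ht.2]) ht.1 (by ring)
    have hwm : ⟪w, m⟫ = 0 := hft
    -- the conjugated reflection
    set r : EuclideanSpace ℝ (Fin 3) ≃ₗᵢ[ℝ] EuclideanSpace ℝ (Fin 3) := Submodule.reflection (ℝ ∙ (n i))ᗮ with hr
    have hrG : r ∈ G := by
      rw [hG]
      exact Subgroup.subset_closure ⟨i, rfl⟩
    set s : EuclideanSpace ℝ (Fin 3) ≃ₗᵢ[ℝ] EuclideanSpace ℝ (Fin 3) := g⁻¹ * r * g with hs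
    have hsG : s ∈ G := mul_mem (mul_mem (inv_mem hg) hrG) hg
    have hsm : s m = -m := by
      show g.symm (r (g m)) = -m
      rw [hgm, hr, Submodule.reflection_orthogonalComplement_singleton_eq_neg, map_neg, hm]
    have hsne : s ≠ 1 := by
      intro h
      have h1 : m = -m := by rw [← hsm, h]; rfl
      have h3 : m + m = 0 := by nth_rewrite 1 [h1]; exact neg_add_cancel m
      have h2 : m = 0 := by
        have h4 : (2:ℝ) • m = 0 := by rw [two_smul]; exact h3
        simpa using (smul_eq_zero.mp h4).resolve_left (by norm_num)
      have : ‖m‖ = 1 := by rw [hm, g.symm.norm_map]; exact hn i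
      rw [h2] at this; simp at this
    have hsw : s w = w := by
      show g.symm (r (g w)) = w
      have : g w ∈ (ℝ ∙ (n i))ᗮ := by
        rw [Submodule.mem_orthogonal_singleton_iff_inner_right, ← hgm,
          g.inner_map_map]
        rw [real_inner_comm]; exact hwm
      rw [hr, Submodule.reflection_mem_subspace_eq_self this, g.symm_apply_apply]
    have : w ∈ (s '' interior B) ∩ interior B := ⟨⟨w, hwint, hsw⟩, hwint⟩
    rw [hdisj s hsG hsne] at this
    exact this
  rcases key with h | h
  · exact mul_nonneg (h x hx) (h y hy)
  · simpa [neg_mul_neg] using mul_nonneg (neg_nonneg.mpr (h x hx)) (neg_nonneg.mpr (h y hy))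
end

section
/- Let G be a finite group acting on ℝ³ by linear isometries, all of whose rotations share a common axis L (i.e., every nontrivial rotation in G fixes the line L pointwise, as for the dihedral-type groups [2,n]). Then for any point x ∈ ℝ³, the Hausdorff distance from the orbit G·x to the unit sphere S² is at least √2/2; in particular, taking the north pole p of the axis, dist(p, G·x) ≥ √2/2 whenever the orbit avoids a neighborhood of the poles, and the infimum over orbits of d_H(G·x, S²) is at least √2/2. -/
open scoped RealInnerProductSpace

local notation "E3" => EuclideanSpace ℝ (Fin 3)

private noncomputable def myDet (g : E3 ≃ₗᵢ[ℝ] E3) : ℝ :=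
  LinearMap.det ((g.toLinearEquiv : E3 ≃ₗ[ℝ] E3) : E3 →ₗ[ℝ] E3)

private lemma myDet_mul (g h : E3 ≃ₗᵢ[ℝ] E3) : myDet (g * h) = myDet g * myDet h := by
  unfold myDet
  rw [show (((g * h).toLinearEquiv : E3 ≃ₗ[ℝ] E3) : E3 →ₗ[ℝ] E3)
      = ((g.toLinearEquiv : E3 ≃ₗ[ℝ] E3) : E3 →ₗ[ℝ] E3) ∘ₗ
        ((h.toLinearEquiv : E3 ≃ₗ[ℝ] E3) : E3 →ₗ[ℝ] E3) from rfl,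
    LinearMap.det_comp]

private lemma myDet_one : myDet 1 = 1 := LinearMap.det_id

private lemma myDet_pow (g : E3 ≃ₗᵢ[ℝ] E3) (n : ℕ) : myDet (g ^ n) = (myDet g) ^ n := by
  induction n with
  | zero => simpa using myDet_one
  | succ n ih => rw [pow_succ, myDet_mul, ih, pow_succ]

private lemma pm_one_of_pow {x : ℝ} {n : ℕ} (hn : 0 < n) (h : x ^ n = 1) : x = 1 ∨ x = -1 := by
  have habs : |x| ^ n = 1 := by rw [← abs_pow, h, abs_one]
  have h1 : |x| = 1 := by
    rcases lt_trichotomy |x| 1 with hlt | heq | hgt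
    · have := pow_lt_one₀ (abs_nonneg x) hlt hn.ne'
      linarith
    · exact heq
    · have := one_lt_pow₀ hgt hn.ne'
      linarith
  exact abs_eq (by norm_num : (0:ℝ) ≤ 1) |>.mp h1

private lemma myDet_pm {G : Subgroup (E3 ≃ₗᵢ[ℝ] E3)} (hfin : Finite G)
    {g : E3 ≃ₗᵢ[ℝ] E3} (hg : g ∈ G) : myDet g = 1 ∨ myDet g = -1 := by
  set gg : G := ⟨g, hg⟩
  have hord : 0 < orderOf gg := orderOf_pos gg
  have hpow : gg ^ orderOf gg = 1 := pow_orderOf_eq_one gg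
  have hpow' : g ^ orderOf gg = 1 := by
    have := congrArg (Subtype.val) hpow
    exact this
  refine pm_one_of_pow hord ?_
  rw [← myDet_pow, hpow', myDet_one]

private lemma tri (r h₁ h₂ ρ₁ ρ₂ : ℝ) (hρ₁ : 0 ≤ ρ₁) (hρ₂ : 0 ≤ ρ₂)
    (e₁ : ρ₁ ^ 2 = r ^ 2 - h₁ ^ 2) (e₂ : ρ₂ ^ 2 = r ^ 2 - h₂ ^ 2) :
    (1/2 ≤ 1 + r^2 - 2*h₁ ∧ 1/2 ≤ 1 + r^2 - 2*h₂) ∨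
    (1/2 ≤ 1 + r^2 + 2*h₁ ∧ 1/2 ≤ 1 + r^2 + 2*h₂) ∨
    (1/2 ≤ 1 + r^2 - 2*ρ₁ ∧ 1/2 ≤ 1 + r^2 - 2*ρ₂) := by
  have kAB : ∀ h : ℝ, 1 + r^2 - 2*h < 1/2 → 1/2 ≤ 1 + r^2 + 2*h := by
    intro h u; nlinarith [sq_nonneg r]
  have kAC : ∀ h ρ : ℝ, 0 ≤ ρ → ρ^2 = r^2 - h^2 →
      1 + r^2 - 2*h < 1/2 → 1/2 ≤ 1 + r^2 - 2*ρ := by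
    intro h ρ hρ he u
    by_contra v; push_neg at v
    nlinarith [sq_nonneg (2*h - 2*ρ), sq_nonneg (r^2 - 1/2), sq_nonneg (2*h - (1/2 + r^2)),
      sq_nonneg (2*ρ - (1/2 + r^2))]
  have kBC : ∀ h ρ : ℝ, 0 ≤ ρ → ρ^2 = r^2 - h^2 →
      1 + r^2 + 2*h < 1/2 → 1/2 ≤ 1 + r^2 - 2*ρ := by
    intro h ρ hρ he u
    by_contra v; push_neg at v
    nlinarith [sq_nonneg (2*h + 2*ρ), sq_nonneg (r^2 - 1/2), sq_nonneg (-(2*h) - (1/2 + r^2)),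
      sq_nonneg (2*ρ - (1/2 + r^2))]
  by_cases c1 : 1 + r^2 - 2*h₁ < 1/2
  · by_cases c2 : 1 + r^2 - 2*h₂ < 1/2
    · exact Or.inr (Or.inl ⟨kAB h₁ c1, kAB h₂ c2⟩)
    · by_cases c4 : 1 + r^2 + 2*h₂ < 1/2
      · exact Or.inr (Or.inr ⟨kAC h₁ ρ₁ hρ₁ e₁ c1, kBC h₂ ρ₂ hρ₂ e₂ c4⟩)
      · exact Or.inr (Or.inl ⟨kAB h₁ c1, not_lt.mp c4⟩)
  · by_cases c2 : 1 + r^2 - 2*h₂ < 1/2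
    · by_cases c3 : 1 + r^2 + 2*h₁ < 1/2
      · exact Or.inr (Or.inr ⟨kBC h₁ ρ₁ hρ₁ e₁ c3, kAC h₂ ρ₂ hρ₂ e₂ c2⟩)
      · exact Or.inr (Or.inl ⟨not_lt.mp c3, kAB h₂ c2⟩)
    · exact Or.inl ⟨not_lt.mp c1, not_lt.mp c2⟩

/-- If `G` is a finite group of linear isometries of `ℝ³` all of whose nontrivial
rotations fix a common axis `L` pointwise, then every orbit is at Hausdorff
distance at least `√2/2` from the unit sphere. -/
theorem stmt_9
    (G : Subgroup (EuclideanSpace ℝ (Fin 3) ≃ₗᵢ[ℝ] EuclideanSpace ℝ (Fin 3)))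
    (hfin : Finite G)
    (L : Submodule ℝ (EuclideanSpace ℝ (Fin 3))) (hL : Module.finrank ℝ L = 1)
    (haxis : ∀ g ∈ G, g ≠ 1 →
      LinearMap.det ((g : EuclideanSpace ℝ (Fin 3) ≃ₗᵢ[ℝ] EuclideanSpace ℝ (Fin 3)).toLinearEquiv
        : EuclideanSpace ℝ (Fin 3) →ₗ[ℝ] EuclideanSpace ℝ (Fin 3)) = 1 →
      ∀ v ∈ L, g v = v) :
    ∀ x : EuclideanSpace ℝ (Fin 3),
      Real.sqrt 2 / 2 ≤ Metric.hausdorffDist {v | ∃ g ∈ G, v = g x}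
        (Metric.sphere (0 : EuclideanSpace ℝ (Fin 3)) 1) := by
  intro x
  set O : Set E3 := {v | ∃ g ∈ G, v = g x} with hOdef
  set r : ℝ := ‖x‖ with hrdef
  -- a unit vector on the axis
  have hLbot : L ≠ ⊥ := by
    intro h; rw [h] at hL; simp at hL
  obtain ⟨w, hwL, hw0⟩ := Submodule.exists_mem_ne_zero_of_ne_bot hLbot
  set u : E3 := (‖w‖ : ℝ)⁻¹ • w with hu_def
  have hu1 : ‖u‖ = 1 := norm_smul_inv_norm hw0
  have huL : u ∈ L := L.smul_mem _ hwL
  have hu0 : u ≠ 0 := by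
    intro h; rw [h, norm_zero] at hu1; norm_num at hu1
  -- a unit vector orthogonal to u
  obtain ⟨e, he1, heu⟩ : ∃ e : E3, ‖e‖ = 1 ∧ ⟪u, e⟫ = 0 := by
    have hK : Module.finrank ℝ (ℝ ∙ u) = 1 := finrank_span_singleton hu0
    have hKadd := Submodule.finrank_add_finrank_orthogonal (𝕜 := ℝ) (K := ℝ ∙ u)
    rw [hK, finrank_euclideanSpace_fin] at hKadd
    have hKbot : (ℝ ∙ u)ᗮ ≠ ⊥ := by
      intro h; rw [h] at hKadd; simp at hKadd
    obtain ⟨w', hw'K, hw'0⟩ := Submodule.exists_mem_ne_zero_of_ne_bot hKbot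
    refine ⟨(‖w'‖ : ℝ)⁻¹ • w', norm_smul_inv_norm hw'0, ?_⟩
    have h0 : ⟪u, w'⟫ = 0 :=
      (Submodule.mem_orthogonal _ _).mp hw'K u (Submodule.mem_span_singleton_self u)
    rw [real_inner_smul_right, h0, mul_zero]
  -- the orbit lies on at most two latitudes
  obtain ⟨h₁, h₂, hb₁, hb₂, key⟩ :
      ∃ h₁ h₂ : ℝ, h₁^2 ≤ r^2 ∧ h₂^2 ≤ r^2 ∧
        ∀ v ∈ O, ‖v‖ = r ∧ (⟪u, v⟫ = h₁ ∨ ⟪u, v⟫ = h₂) := by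
    have hnorm : ∀ v ∈ O, ‖v‖ = r := by
      rintro v ⟨g, hg, rfl⟩; exact g.norm_map x
    have hbound : ∀ v : E3, ‖v‖ = r → (⟪u, v⟫ : ℝ)^2 ≤ r^2 := by
      intro v hv
      have h1 := abs_real_inner_le_norm u v
      rw [hu1, one_mul, hv] at h1
      nlinarith [abs_nonneg (⟪u, v⟫ : ℝ), sq_abs (⟪u, v⟫ : ℝ)]
    have hfix : ∀ g, g ∈ G → myDet g = 1 → g u = u := by
      intro g hg hdet
      by_cases h1 : g = 1
      · rw [h1]; rfl
      · exact haxis g hg h1 hdet u huL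
    by_cases hex : ∃ g₀ ∈ G, myDet g₀ = -1
    · obtain ⟨g₀, hg₀G, hg₀d⟩ := hex
      refine ⟨⟪u, x⟫, ⟪u, g₀ x⟫, hbound x rfl, hbound _ (g₀.norm_map x),
        fun v hv => ⟨hnorm v hv, ?_⟩⟩
      obtain ⟨g, hgG, rfl⟩ := hv
      rcases myDet_pm hfin hgG with hd | hd
      · left
        have hgu := hfix g hgG hd
        calc ⟪u, g x⟫ = ⟪g u, g x⟫ := by rw [hgu]
          _ = ⟪u, x⟫ := g.inner_map_map u x
      · right
        set k := g * g₀⁻¹ with hk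
        have hkG : k ∈ G := G.mul_mem hgG (G.inv_mem hg₀G)
        have hinv : myDet g₀⁻¹ = -1 := by
          have h2 : myDet (g₀ * g₀⁻¹) = 1 := by
            rw [mul_inv_cancel]; exact myDet_one
          rw [myDet_mul, hg₀d] at h2
          linarith
        have hdk : myDet k = 1 := by
          rw [hk, myDet_mul, hd, hinv]; norm_num
        have hkapp : k (g₀ x) = g x := by
          show (g * g₀⁻¹) (g₀ x) = g x
          have : g₀⁻¹ (g₀ x) = x := g₀.symm_apply_apply x
          show g (g₀⁻¹ (g₀ x)) = g x
          rw [this]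
        have hku := hfix k hkG hdk
        calc ⟪u, g x⟫ = ⟪u, k (g₀ x)⟫ := by rw [hkapp]
          _ = ⟪k u, k (g₀ x)⟫ := by rw [hku]
          _ = ⟪u, g₀ x⟫ := k.inner_map_map u (g₀ x)
    · refine ⟨⟪u, x⟫, ⟪u, x⟫, hbound x rfl, hbound x rfl, fun v hv => ⟨hnorm v hv, ?_⟩⟩
      obtain ⟨g, hgG, rfl⟩ := hv
      left
      rcases myDet_pm hfin hgG with hd | hd
      · have hgu := hfix g hgG hd
        calc ⟪u, g x⟫ = ⟪g u, g x⟫ := by rw [hgu]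
          _ = ⟪u, x⟫ := g.inner_map_map u x
      · exact absurd ⟨g, hgG, hd⟩ hex
  -- radii of the two latitudes
  set ρ₁ : ℝ := Real.sqrt (r^2 - h₁^2) with hρ₁def
  set ρ₂ : ℝ := Real.sqrt (r^2 - h₂^2) with hρ₂def
  have hρ₁0 : 0 ≤ ρ₁ := Real.sqrt_nonneg _
  have hρ₂0 : 0 ≤ ρ₂ := Real.sqrt_nonneg _
  have hρ₁sq : ρ₁^2 = r^2 - h₁^2 := Real.sq_sqrt (by linarith)
  have hρ₂sq : ρ₂^2 = r^2 - h₂^2 := Real.sq_sqrt (by linarith)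
  -- inner product with e is bounded by the radius
  have hinner_e : ∀ v : E3, ‖v‖ = r → ∀ t ρ : ℝ, ⟪u, v⟫ = t → 0 ≤ ρ →
      ρ^2 = r^2 - t^2 → ⟪e, v⟫ ≤ ρ := by
    intro v hv t ρ ht hρ hsq
    have h1 : ⟪e, v⟫ = ⟪e, v - t • u⟫ := by
      rw [inner_sub_right, real_inner_smul_right]
      have heu' : (inner ℝ e u : ℝ) = 0 := by rw [real_inner_comm]; exact heu
      rw [heu', mul_zero, sub_zero]
    have hvu : ⟪v, u⟫ = t := by rw [real_inner_comm]; exact ht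
    have h2 : ‖v - t • u‖^2 = ρ^2 := by
      rw [norm_sub_sq_real, real_inner_smul_right, hvu, norm_smul, hu1, hv, hsq,
        Real.norm_eq_abs, mul_one, sq_abs]
      ring
    have h3 : ⟪e, v - t • u⟫ ≤ ‖v - t • u‖ := by
      have h4 := real_inner_le_norm e (v - t • u)
      rwa [he1, one_mul] at h4
    have h4 : ‖v - t • u‖ = ρ := by
      have h5 := congrArg Real.sqrt h2
      rwa [Real.sqrt_sq (norm_nonneg _), Real.sqrt_sq hρ] at h5
    rw [h1, ← h4]
    exact h3
  -- choose a point on the unit sphere far from the orbit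
  obtain ⟨Q, hQ1, hQfar⟩ : ∃ Q : E3, ‖Q‖ = 1 ∧ ∀ v ∈ O, 1/2 ≤ ‖Q - v‖^2 := by
    rcases tri r h₁ h₂ ρ₁ ρ₂ hρ₁0 hρ₂0 hρ₁sq hρ₂sq with ⟨c1, c2⟩ | ⟨c1, c2⟩ | ⟨c1, c2⟩
    · refine ⟨u, hu1, fun v hv => ?_⟩
      obtain ⟨hvn, hvi⟩ := key v hv
      rw [norm_sub_sq_real, hu1, hvn]
      rcases hvi with h | h <;> rw [h] <;> norm_num <;> linarith
    · refine ⟨-u, by rw [norm_neg, hu1], fun v hv => ?_⟩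
      obtain ⟨hvn, hvi⟩ := key v hv
      rw [norm_sub_sq_real, norm_neg, hu1, hvn, inner_neg_left]
      rcases hvi with h | h <;> rw [h] <;> norm_num <;> linarith
    · refine ⟨e, he1, fun v hv => ?_⟩
      obtain ⟨hvn, hvi⟩ := key v hv
      rw [norm_sub_sq_real, he1, hvn]
      rcases hvi with h | h
      · have := hinner_e v hvn h₁ ρ₁ h hρ₁0 hρ₁sq
        rw [one_pow]; linarith
      · have := hinner_e v hvn h₂ ρ₂ h hρ₂0 hρ₂sq
        rw [one_pow]; linarith
  -- conclude via the Hausdorff distance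
  have hxO : x ∈ O := ⟨1, G.one_mem, rfl⟩
  have hOfin : O.Finite := by
    have hsub : O ⊆ Set.range (fun g : G => (g : E3 ≃ₗᵢ[ℝ] E3) x) := by
      rintro v ⟨g, hg, rfl⟩; exact ⟨⟨g, hg⟩, rfl⟩
    exact (Set.finite_range _).subset hsub
  have hOne : O.Nonempty := ⟨x, hxO⟩
  have hObdd : Bornology.IsBounded O := hOfin.isBounded
  have hedist : EMetric.hausdorffEdist O (Metric.sphere (0:E3) 1) ≠ ⊤ :=
    Metric.hausdorffEdist_ne_top_of_nonempty_of_bounded hOne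
      (NormedSpace.sphere_nonempty.mpr one_pos.le) hObdd Metric.isBounded_sphere
  have hQs : Q ∈ Metric.sphere (0:E3) 1 := mem_sphere_zero_iff_norm.mpr hQ1
  have hstep : Real.sqrt 2 / 2 ≤ Metric.infDist Q O := by
    obtain ⟨y, hyO, hy⟩ := hOfin.isCompact.exists_infDist_eq_dist hOne Q
    rw [hy, dist_eq_norm]
    have h12 : 1/2 ≤ ‖Q - y‖^2 := hQfar y hyO
    have hs : Real.sqrt (1/2) ≤ ‖Q - y‖ := by
      have := Real.sqrt_le_sqrt h12
      rwa [Real.sqrt_sq (norm_nonneg _)] at this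
    have hhalf : Real.sqrt (1/2 : ℝ) = Real.sqrt 2 / 2 := by
      have hsq : (Real.sqrt 2 / 2)^2 = (1/2 : ℝ) := by
        rw [div_pow, Real.sq_sqrt (by norm_num : (0:ℝ) ≤ 2)]; norm_num
      rw [← hsq, Real.sqrt_sq (by positivity)]
    linarith [hhalf ▸ hs]
  calc Real.sqrt 2 / 2 ≤ Metric.infDist Q O := hstep
    _ ≤ Metric.hausdorffDist (Metric.sphere (0:E3) 1) O :=
        Metric.infDist_le_hausdorffDist_of_mem hQs
          (by rw [Metric.hausdorffEDist_comm]; exact hedist)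
    _ = Metric.hausdorffDist O (Metric.sphere (0:E3) 1) := Metric.hausdorffDist_comm
end

section
/- Let x, y, z be the vertices of a spherical triangle B' ⊂ S² whose sides are arcs of great circles fixed by reflections, and let c be the Chebyshev center of {x, y, z}. Suppose ‖c‖ ≤ ‖(a+b)/2‖ for each side [a,b] of the triangle. Then for every point p on any spherical side of B', dist(c, p) ≤ max(dist(c,x), dist(c,y), dist(c,z)); hence c is the Chebyshev center of B'. -/
open scoped RealInnerProductSpace

/-- If `c` is the Chebyshev center of the vertices `{x,y,z}` of a spherical triangle
`B'` and `‖c‖` is at most the norm of the Euclidean midpoint of each side, then every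
point of a spherical side of `B'` is within the Chebyshev radius of the vertices
from `c`; hence `c` is the Chebyshev center of `B'`. -/
theorem stmt_13 (x y z c : EuclideanSpace ℝ (Fin 3))
    (hx : ‖x‖ = 1) (hy : ‖y‖ = 1) (hz : ‖z‖ = 1)
    (arc : EuclideanSpace ℝ (Fin 3) → EuclideanSpace ℝ (Fin 3)
      → Set (EuclideanSpace ℝ (Fin 3)))
    (harc : ∀ a b, arc a b = {p | ‖p‖ = 1 ∧ ∃ s t : ℝ, 0 ≤ s ∧ 0 ≤ t ∧ p = s • a + t • b})
    (B' : Set (EuclideanSpace ℝ (Fin 3)))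
    (hB' : B' = {p | ‖p‖ = 1 ∧ ∃ s t u : ℝ, 0 ≤ s ∧ 0 ≤ t ∧ 0 ≤ u ∧
      p = s • x + t • y + u • z})
    (hc : ∀ d : EuclideanSpace ℝ (Fin 3),
      max (max (dist c x) (dist c y)) (dist c z)
        ≤ max (max (dist d x) (dist d y)) (dist d z))
    (hm₁ : ‖c‖ ≤ ‖(2 : ℝ)⁻¹ • (x + y)‖) (hm₂ : ‖c‖ ≤ ‖(2 : ℝ)⁻¹ • (y + z)‖) (hm₃ : ‖c‖ ≤ ‖(2 : ℝ)⁻¹ • (z + x)‖) :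
    (∀ p ∈ arc x y ∪ arc y z ∪ arc z x,
      dist c p ≤ max (max (dist c x) (dist c y)) (dist c z)) ∧
    (∀ p ∈ B', dist c p ≤ max (max (dist c x) (dist c y)) (dist c z)) ∧
    (∀ d : EuclideanSpace ℝ (Fin 3),
      sSup ((fun p => dist c p) '' B') ≤ sSup ((fun p => dist d p) '' B')) := by
  set R := max (max (dist c x) (dist c y)) (dist c z) with hRdef
  have hcxR : dist c x ≤ R := le_max_of_le_left (le_max_left _ _)
  have hcyR : dist c y ≤ R := le_max_of_le_left (le_max_right _ _)
  have hczR : dist c z ≤ R := le_max_right _ _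
  have hR0 : 0 ≤ R := le_trans dist_nonneg hcxR
  -- Taking d = 0 in hc gives R ≤ 1
  have hR1 : R ≤ 1 := by
    have h0 := hc 0
    simpa [dist_zero_left, hx, hy, hz] using h0
  -- distance squared formula
  have hdsq : ∀ v : EuclideanSpace ℝ (Fin 3),
      dist c v ^ 2 = ‖c‖ ^ 2 - 2 * ⟪c, v⟫ + ‖v‖ ^ 2 := by
    intro v
    rw [dist_eq_norm, @norm_sub_sq_real]
  -- each vertex inner product is at least ‖c‖²/2 ≥ 0
  have hin : ∀ v : EuclideanSpace ℝ (Fin 3), ‖v‖ = 1 → dist c v ≤ R →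
      ‖c‖ ^ 2 / 2 ≤ ⟪c, v⟫ := by
    intro v hv hdv
    have h1 : dist c v ≤ 1 := le_trans hdv hR1
    have h2 := hdsq v
    nlinarith [dist_nonneg (x := c) (y := v)]
  have hax : ‖c‖ ^ 2 / 2 ≤ ⟪c, x⟫ := hin x hx hcxR
  have hay : ‖c‖ ^ 2 / 2 ≤ ⟪c, y⟫ := hin y hy hcyR
  have haz : ‖c‖ ^ 2 / 2 ≤ ⟪c, z⟫ := hin z hz hczR
  have hc2 : (0:ℝ) ≤ ‖c‖ ^ 2 / 2 := by positivity
  -- the key claim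
  have key : ∀ s t u : ℝ, 0 ≤ s → 0 ≤ t → 0 ≤ u →
      ∀ p : EuclideanSpace ℝ (Fin 3), p = s • x + t • y + u • z → ‖p‖ = 1 →
      dist c p ≤ R := by
    intro s t u hs ht hu p hp hpn
    have hsum : 1 ≤ s + t + u := by
      have h1 : ‖p‖ ≤ ‖s • x‖ + ‖t • y‖ + ‖u • z‖ := by
        rw [hp]
        exact le_trans (norm_add_le _ _) (by gcongr; exact norm_add_le _ _)
      rw [hpn, norm_smul, norm_smul, norm_smul, hx, hy, hz] at h1
      simp only [Real.norm_eq_abs, abs_of_nonneg hs, abs_of_nonneg ht,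
        abs_of_nonneg hu, mul_one] at h1
      linarith
    have hip : ⟪c, p⟫ = s * ⟪c, x⟫ + t * ⟪c, y⟫ + u * ⟪c, z⟫ := by
      rw [hp, inner_add_right, inner_add_right, real_inner_smul_right,
        real_inner_smul_right, real_inner_smul_right]
    set m := min (min ⟪c, x⟫ ⟪c, y⟫) ⟪c, z⟫ with hm
    have hmx : m ≤ ⟪c, x⟫ := le_trans (min_le_left _ _) (min_le_left _ _)
    have hmy : m ≤ ⟪c, y⟫ := le_trans (min_le_left _ _) (min_le_right _ _)
    have hmz : m ≤ ⟪c, z⟫ := min_le_right _ _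
    have hm0 : 0 ≤ m := le_min (le_min (le_trans hc2 hax) (le_trans hc2 hay))
      (le_trans hc2 haz)
    have hRm : ‖c‖ ^ 2 + 1 - 2 * m ≤ R ^ 2 := by
      have hchoice : m = ⟪c, x⟫ ∨ m = ⟪c, y⟫ ∨ m = ⟪c, z⟫ := by
        rcases min_choice (min ⟪c, x⟫ ⟪c, y⟫) ⟪c, z⟫ with h | h
        · rcases min_choice ⟪c, x⟫ ⟪c, y⟫ with h' | h'
          · exact Or.inl (by rw [hm, h, h'])
          · exact Or.inr (Or.inl (by rw [hm, h, h']))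
        · exact Or.inr (Or.inr (by rw [hm, h]))
      rcases hchoice with h | h | h
      · have h1 := hdsq x
        rw [hx] at h1
        have h2 : dist c x ^ 2 ≤ R ^ 2 := pow_le_pow_left₀ dist_nonneg hcxR 2
        linarith [h.symm.le, h.le]
      · have h1 := hdsq y
        rw [hy] at h1
        have h2 : dist c y ^ 2 ≤ R ^ 2 := pow_le_pow_left₀ dist_nonneg hcyR 2
        linarith [h.symm.le, h.le]
      · have h1 := hdsq z
        rw [hz] at h1
        have h2 : dist c z ^ 2 ≤ R ^ 2 := pow_le_pow_left₀ dist_nonneg hczR 2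
        linarith [h.symm.le, h.le]
    have hipm : m ≤ ⟪c, p⟫ := by
      rw [hip]
      nlinarith [mul_le_mul_of_nonneg_left hmx hs, mul_le_mul_of_nonneg_left hmy ht,
        mul_le_mul_of_nonneg_left hmz hu]
    have hdp : dist c p ^ 2 ≤ R ^ 2 := by
      have h1 := hdsq p
      rw [hpn] at h1
      linarith
    exact (pow_le_pow_iff_left₀ dist_nonneg hR0 two_ne_zero).mp hdp
  -- membership of vertices in B'
  have hxB : x ∈ B' := by
    rw [hB']
    exact ⟨hx, 1, 0, 0, zero_le_one, le_refl _, le_refl _, by simp⟩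
  have hyB : y ∈ B' := by
    rw [hB']
    exact ⟨hy, 0, 1, 0, le_refl _, zero_le_one, le_refl _, by simp⟩
  have hzB : z ∈ B' := by
    rw [hB']
    exact ⟨hz, 0, 0, 1, le_refl _, le_refl _, zero_le_one, by simp⟩
  -- second conclusion
  have part2 : ∀ p ∈ B', dist c p ≤ R := by
    intro p hp
    rw [hB'] at hp
    obtain ⟨hpn, s, t, u, hs, ht, hu, hpe⟩ := hp
    exact key s t u hs ht hu p hpe hpn
  refine ⟨?_, part2, ?_⟩
  · intro p hp
    rcases hp with (h | h) | h
    · rw [harc] at h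
      obtain ⟨hpn, s, t, hs, ht, hpe⟩ := h
      exact key s t 0 hs ht (le_refl _) p (by rw [hpe]; module) hpn
    · rw [harc] at h
      obtain ⟨hpn, s, t, hs, ht, hpe⟩ := h
      exact key 0 s t (le_refl _) hs ht p (by rw [hpe]; module) hpn
    · rw [harc] at h
      obtain ⟨hpn, s, t, hs, ht, hpe⟩ := h
      exact key t 0 s ht (le_refl _) hs p (by rw [hpe]; module) hpn
  · intro d
    have hBne : ((fun p => dist c p) '' B').Nonempty := ⟨_, ⟨x, hxB, rfl⟩⟩
    have h1 : sSup ((fun p => dist c p) '' B') ≤ R := by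
      apply csSup_le hBne
      rintro r ⟨p, hp, rfl⟩
      exact part2 p hp
    have hbdd : BddAbove ((fun p => dist d p) '' B') := by
      refine ⟨‖d‖ + 1, ?_⟩
      rintro r ⟨p, hp, rfl⟩
      have hpn : ‖p‖ = 1 := by rw [hB'] at hp; exact hp.1
      calc dist d p ≤ ‖d‖ + ‖p‖ := by rw [dist_eq_norm]; exact norm_sub_le _ _
        _ = ‖d‖ + 1 := by rw [hpn]
    have h2 : R ≤ sSup ((fun p => dist d p) '' B') := by
      refine le_trans (hc d) ?_
      refine max_le (max_le ?_ ?_) ?_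
      · exact le_csSup hbdd ⟨x, hxB, rfl⟩
      · exact le_csSup hbdd ⟨y, hyB, rfl⟩
      · exact le_csSup hbdd ⟨z, hzB, rfl⟩
    linarith
end

section
/- Let H < O(3) be the dihedral group of order 2n generated by two reflections R₁, R₂ whose mirror planes meet at angle π/n (n ∈ {2,3,4,5}), and let B be the closed wedge between the two planes. Then for all x, y ∈ B and all g ∈ H, dist(x, y) ≤ dist(g x, y). -/
open scoped RealInnerProductSpace
open Real

private lemma cos_mono_aux (n : ℕ) (hn2 : 2 ≤ n) (r : ℤ) (h1 : 1 ≤ r) (h2 : r ≤ n) :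
    Real.cos (r * (π / n)) ≤ Real.cos (π / n) := by
  have hnR : (0:ℝ) < (n:ℝ) := by exact_mod_cast (by omega : 0 < n)
  have hπn : 0 ≤ π / n := le_of_lt (div_pos Real.pi_pos hnR)
  have hrR : (1:ℝ) ≤ (r:ℝ) := by exact_mod_cast h1
  have hrn : (r:ℝ) ≤ (n:ℝ) := by exact_mod_cast h2
  have hnpi : (n:ℝ) * (π/n) = π := by field_simp
  apply Real.cos_le_cos_of_nonneg_of_le_pi hπn
  · nlinarith
  · nlinarith

private lemma keyC (n : ℕ) (hn2 : 2 ≤ n) (m : ℤ) (hm : m % 2 = 1) :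
    Real.cos (m * (π / n)) ≤ Real.cos (π / n) := by
  have hnR : (0:ℝ) < (n:ℝ) := by exact_mod_cast (by omega : 0 < n)
  set q : ℤ := m / (2 * n) with hq
  set r : ℤ := m % (2 * n) with hr
  have hN : (0:ℤ) < 2 * n := by
    have : (0:ℤ) < (n:ℤ) := by exact_mod_cast (by omega : 0 < n)
    omega
  have hdm : m = 2 * (n:ℤ) * q + r := by
    rw [hq, hr]
    have := Int.mul_ediv_add_emod m (2 * (n:ℤ))
    linarith
  have hr0 : 0 ≤ r := Int.emod_nonneg m (by omega)
  have hrlt : r < 2 * n := Int.emod_lt_of_pos m hN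
  have hrodd : r % 2 = 1 := by
    have h2 : m = 2 * ((n:ℤ) * q) + r := by rw [hdm]; ring
    generalize (n:ℤ) * q = t at h2
    omega
  have hcos : (m:ℝ) * (π / n) = r * (π / n) + q * (2 * π) := by
    have hm' : (m:ℝ) = 2 * n * q + r := by exact_mod_cast hdm
    rw [hm']; field_simp; ring
  rw [hcos, Real.cos_add_int_mul_two_pi]
  by_cases hc : r ≤ n
  · exact cos_mono_aux n hn2 r (by omega) hc
  · have key : (r:ℝ) * (π/n) = 2 * π - ((2*n - r : ℤ):ℝ) * (π/n) := by
      push_cast; field_simp; ring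
    rw [key, Real.cos_two_pi_sub]
    exact cos_mono_aux n hn2 (2*n - r) (by omega) (by omega)

private lemma keyL (n : ℕ) (hn2 : 2 ≤ n) (j m : ℤ) (hj : j = -1 ∨ j = 0 ∨ j = 1)
    (hpar : (m - j) % 2 = 0) :
    Real.cos (m * (π / n)) ≤ Real.cos (j * (π / n)) := by
  rcases hj with h | h | h <;> subst h
  · rw [show ((-1:ℤ):ℝ) * (π/n) = -(π/n) by push_cast; ring, Real.cos_neg]
    exact keyC n hn2 m (by omega)
  · simpa using Real.cos_le_one _
  · rw [show ((1:ℤ):ℝ) * (π/n) = (π/n) by push_cast; ring]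
    exact keyC n hn2 m (by omega)

private lemma fdecomp_aux {E : Type*} [AddCommGroup E] [Module ℝ E] (u v : E) (θ φ : ℝ) :
    Real.cos θ • u + Real.sin θ • v =
      Real.cos (θ - φ) • (Real.cos φ • u + Real.sin φ • v) +
      (-Real.sin (θ - φ)) • (Real.cos (φ - π/2) • u + Real.sin (φ - π/2) • v) := by
  rw [Real.cos_sub_pi_div_two, Real.sin_sub_pi_div_two, Real.cos_sub, Real.sin_sub]
  match_scalars <;>
  first
    | linear_combination (2*Real.cos θ) * Real.sin_sq_add_cos_sq φ
    | linear_combination (-2*Real.cos θ) * Real.sin_sq_add_cos_sq φ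
    | linear_combination (2*Real.sin θ) * Real.sin_sq_add_cos_sq φ
    | linear_combination (-2*Real.sin θ) * Real.sin_sq_add_cos_sq φ
    | linear_combination (Real.cos θ) * Real.sin_sq_add_cos_sq φ
    | linear_combination (-Real.cos θ) * Real.sin_sq_add_cos_sq φ
    | linear_combination (Real.sin θ) * Real.sin_sq_add_cos_sq φ
    | linear_combination (-Real.sin θ) * Real.sin_sq_add_cos_sq φ

set_option maxHeartbeats 1600000 in
/-- For the dihedral group of order `2n` generated by two reflections whose mirror
planes meet at angle `π/n` (`n ∈ {2,3,4,5}`), and for the closed wedge `B` between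
the two planes, `dist(x,y) ≤ dist(gx,y)` for all `x, y ∈ B` and `g ∈ H`. -/
theorem stmt_15 (n : ℕ) (hn : n = 2 ∨ n = 3 ∨ n = 4 ∨ n = 5)
    (n₁ n₂ : EuclideanSpace ℝ (Fin 3)) (hn₁ : ‖n₁‖ = 1) (hn₂ : ‖n₂‖ = 1)
    (hangle : ⟪n₁, n₂⟫ = -Real.cos (π / n))
    (H : Subgroup (EuclideanSpace ℝ (Fin 3) ≃ₗᵢ[ℝ] EuclideanSpace ℝ (Fin 3)))
    (hH : H = Subgroup.closure {Submodule.reflection (ℝ ∙ n₁)ᗮ, Submodule.reflection (ℝ ∙ n₂)ᗮ})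
    (hcard : Nat.card H = 2 * n)
    (B : Set (EuclideanSpace ℝ (Fin 3)))
    (hB : B = {x | 0 ≤ ⟪x, n₁⟫ ∧ 0 ≤ ⟪x, n₂⟫}) :
    ∀ x ∈ B, ∀ y ∈ B, ∀ g ∈ H, dist x y ≤ dist (g x) y := by
  subst hH hB
  have hn2 : 2 ≤ n := by rcases hn with h|h|h|h <;> omega
  have hnR : (0:ℝ) < (n:ℝ) := by exact_mod_cast (by omega : 0 < n)
  set c' := Real.cos (π / n) with hc'def
  set s' := Real.sin (π / n) with hs'def
  have hπpos : 0 < π / n := div_pos Real.pi_pos hnR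
  have hπlt : π / n < π := by
    rw [div_lt_iff₀ hnR]
    have h2 : (2:ℝ) ≤ (n:ℝ) := by exact_mod_cast hn2
    nlinarith [Real.pi_pos]
  have hs'pos : 0 < s' := Real.sin_pos_of_pos_of_lt_pi hπpos hπlt
  have hpy : s' ^ 2 + c' ^ 2 = 1 := Real.sin_sq_add_cos_sq _
  have h11 : ⟪n₁, n₁⟫ = 1 := by
    rw [real_inner_self_eq_norm_sq, hn₁]; norm_num
  have h22' : ⟪n₂, n₂⟫ = 1 := by
    rw [real_inner_self_eq_norm_sq, hn₂]; norm_num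
  have h21 : ⟪n₂, n₁⟫ = -c' := by rw [real_inner_comm]; exact hangle
  set e₂ : EuclideanSpace ℝ (Fin 3) := s'⁻¹ • (n₂ + c' • n₁) with he₂def
  have h12 : ⟪n₁, e₂⟫ = 0 := by
    rw [he₂def]
    rw [real_inner_smul_right, inner_add_right, real_inner_smul_right, hangle, h11]
    ring
  have h22 : ⟪e₂, e₂⟫ = 1 := by
    rw [he₂def]
    simp only [real_inner_smul_left, real_inner_smul_right, inner_add_left, inner_add_right,
      h11, h22', hangle, h21]
    field_simp
    nlinarith [hpy]
  have h21' : ⟪e₂, n₁⟫ = 0 := by rw [real_inner_comm]; exact h12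
  have hn₂e : n₂ = -c' • n₁ + s' • e₂ := by
    rw [he₂def, smul_inv_smul₀ hs'pos.ne']
    module
  set f : ℝ → EuclideanSpace ℝ (Fin 3) := fun θ => Real.cos θ • n₁ + Real.sin θ • e₂
    with hfdef
  have hfin : ∀ θ ψ, ⟪f θ, f ψ⟫ = Real.cos (θ - ψ) := by
    intro θ ψ
    simp only [hfdef, inner_add_left, inner_add_right, real_inner_smul_left,
      real_inner_smul_right, h11, h22, h12, h21']
    rw [Real.cos_sub]; ring
  have hforth : ∀ θ (z : EuclideanSpace ℝ (Fin 3)), ⟪n₁, z⟫ = 0 → ⟪e₂, z⟫ = 0 →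
      ⟪f θ, z⟫ = 0 := by
    intro θ z h1 h2
    simp only [hfdef, inner_add_left, real_inner_smul_left, h1, h2]
    ring
  have hn₁f : n₁ = f 0 := by simp [hfdef]
  have hn₂f : n₂ = f (π - π/n) := by
    rw [hn₂e]; simp only [hfdef, Real.cos_pi_sub, Real.sin_pi_sub, ← hc'def, ← hs'def]
  have he₂f : e₂ = f (π/2) := by simp [hfdef]
  have hdecomp : ∀ θ φ, f θ = Real.cos (θ - φ) • f φ + (-Real.sin (θ - φ)) • f (φ - π/2) := by
    intro θ φ
    simp only [hfdef]
    exact fdecomp_aux n₁ e₂ θ φ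
  have hper : ∀ θ, f (θ + 2 * π) = f θ := by
    intro θ; simp only [hfdef, Real.cos_add_two_pi, Real.sin_add_two_pi]
  -- action of the reflection in the hyperplane orthogonal to `f φ`
  have hrefl : ∀ φ θ, Submodule.reflection (ℝ ∙ (f φ))ᗮ (f θ) = f (2*φ - π - θ) := by
    intro φ θ
    have hmem : f (φ - π/2) ∈ (ℝ ∙ (f φ))ᗮ := by
      rw [Submodule.mem_orthogonal_singleton_iff_inner_right, hfin]
      rw [show φ - (φ - π/2) = π/2 by ring, Real.cos_pi_div_two]
    have hneg : Submodule.reflection (ℝ ∙ (f φ))ᗮ (f φ) = -(f φ) :=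
      Submodule.reflection_mem_subspace_orthogonalComplement_eq_neg
        (Submodule.le_orthogonal_orthogonal _ (Submodule.mem_span_singleton_self _))
    have hfix : Submodule.reflection (ℝ ∙ (f φ))ᗮ (f (φ - π/2)) = f (φ - π/2) :=
      Submodule.reflection_mem_subspace_eq_self hmem
    calc Submodule.reflection (ℝ ∙ (f φ))ᗮ (f θ)
        = Submodule.reflection (ℝ ∙ (f φ))ᗮ
            (Real.cos (θ - φ) • f φ + (-Real.sin (θ - φ)) • f (φ - π/2)) := by
          rw [← hdecomp]
      _ = Real.cos (θ - φ) • (-(f φ)) + (-Real.sin (θ - φ)) • f (φ - π/2) := by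
          rw [map_add, map_smul, map_smul, hneg, hfix]
      _ = f (2*φ - π - θ) := by
          rw [hdecomp (2*φ - π - θ) φ]
          rw [show 2*φ - π - θ - φ = (φ - θ) - π by ring, Real.cos_sub_pi, Real.sin_sub_pi]
          rw [show φ - θ = -(θ - φ) by ring, Real.cos_neg, Real.sin_neg]
          module
  have hfixgen : ∀ (v z : EuclideanSpace ℝ (Fin 3)), ⟪v, z⟫ = 0 →
      Submodule.reflection (ℝ ∙ v)ᗮ z = z := fun v z h =>
    Submodule.reflection_mem_subspace_eq_self (Submodule.mem_orthogonal_singleton_iff_inner_right.mpr h)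
  -- the invariant
  have hPmain : ∀ g ∈ Subgroup.closure {Submodule.reflection (ℝ ∙ n₁)ᗮ, Submodule.reflection (ℝ ∙ n₂)ᗮ},
      (∀ z, ⟪n₁, z⟫ = 0 → ⟪e₂, z⟫ = 0 → g z = z) ∧
      (∃ k : ℤ, (∀ θ, g (f θ) = f (θ + 2*k*(π/n))) ∨
        (∀ θ, g (f θ) = f (2*k*(π/n) + π - θ))) := by
    intro g hg
    refine Subgroup.closure_induction
      (p := fun g _ => (∀ z, ⟪n₁, z⟫ = 0 → ⟪e₂, z⟫ = 0 → g z = z) ∧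
        (∃ k : ℤ, (∀ θ, g (f θ) = f (θ + 2*k*(π/n))) ∨
          (∀ θ, g (f θ) = f (2*k*(π/n) + π - θ)))) ?_ ?_ ?_ ?_ hg
    · intro x hx
      rcases hx with hx | hx
      · subst hx
        constructor
        · intro z h1 _; exact hfixgen n₁ z h1
        · refine ⟨0, Or.inr fun θ => ?_⟩
          conv_lhs => rw [hn₁f]
          rw [hrefl 0 θ]
          rw [show 2*(0:ℤ)*(π/n) + π - θ = (2*0 - π - θ) + 2*π by push_cast; ring]
          rw [hper]
      · simp only [Set.mem_singleton_iff] at hx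
        subst hx
        constructor
        · intro z h1 h2
          apply hfixgen n₂ z
          rw [hn₂e, inner_add_left, real_inner_smul_left, real_inner_smul_left, h1, h2]
          ring
        · refine ⟨-1, Or.inr fun θ => ?_⟩
          conv_lhs => rw [hn₂f]
          rw [hrefl (π - π/n) θ]
          congr 1
          push_cast; ring
    · constructor
      · intro z _ _; rfl
      · exact ⟨0, Or.inl fun θ => by norm_num⟩
    · rintro g₁ g₂ _ _ ⟨hfix1, k₁, hk₁⟩ ⟨hfix2, k₂, hk₂⟩
      constructor
      · intro z h1 h2
        show g₁ (g₂ z) = z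
        rw [hfix2 z h1 h2, hfix1 z h1 h2]
      · rcases hk₁ with hk₁ | hk₁ <;> rcases hk₂ with hk₂ | hk₂
        · refine ⟨k₁ + k₂, Or.inl fun θ => ?_⟩
          show g₁ (g₂ (f θ)) = _
          rw [hk₂ θ, hk₁]; congr 1; push_cast; ring
        · refine ⟨k₁ + k₂, Or.inr fun θ => ?_⟩
          show g₁ (g₂ (f θ)) = _
          rw [hk₂ θ, hk₁]; congr 1; push_cast; ring
        · refine ⟨k₁ - k₂, Or.inr fun θ => ?_⟩
          show g₁ (g₂ (f θ)) = _
          rw [hk₂ θ, hk₁]; congr 1; push_cast; ring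
        · refine ⟨k₁ - k₂, Or.inl fun θ => ?_⟩
          show g₁ (g₂ (f θ)) = _
          rw [hk₂ θ, hk₁]; congr 1; push_cast; ring
    · rintro g _ ⟨hfix, k, hk⟩
      constructor
      · intro z h1 h2
        have h := hfix z h1 h2
        calc g⁻¹ z = g⁻¹ (g z) := by rw [h]
          _ = z := g.symm_apply_apply z
      · rcases hk with hk | hk
        · refine ⟨-k, Or.inl fun θ => ?_⟩
          have h2 : g (f (θ + 2*(-k:ℤ)*(π/n))) = f θ := by
            rw [hk]; congr 1; push_cast; ring
          calc g⁻¹ (f θ) = g⁻¹ (g (f (θ + 2*(-k:ℤ)*(π/n)))) := by rw [h2]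
            _ = f (θ + 2*(-k:ℤ)*(π/n)) := g.symm_apply_apply _
        · refine ⟨k, Or.inr fun θ => ?_⟩
          have h2 : g (f (2*(k:ℤ)*(π/n) + π - θ)) = f θ := by
            rw [hk]; congr 1; push_cast; ring
          calc g⁻¹ (f θ) = g⁻¹ (g (f (2*(k:ℤ)*(π/n) + π - θ))) := by rw [h2]
            _ = f (2*(k:ℤ)*(π/n) + π - θ) := g.symm_apply_apply _
  -- useful inner products
  have hip1 : ∀ θ, ⟪n₁, f θ⟫ = Real.cos θ := by
    intro θ; rw [hn₁f, hfin]; rw [show (0:ℝ) - θ = -θ by ring, Real.cos_neg]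
  have hip2 : ∀ θ, ⟪n₂, f θ⟫ = Real.cos (π - π/n - θ) := by
    intro θ; rw [hn₂f, hfin]
  have hipe : ∀ θ, ⟪e₂, f θ⟫ = Real.sin θ := by
    intro θ; rw [he₂f, hfin, Real.cos_pi_div_two_sub]
  -- decomposition of wedge points
  have hBdec : ∀ x : EuclideanSpace ℝ (Fin 3), 0 ≤ ⟪x, n₁⟫ → 0 ≤ ⟪x, n₂⟫ →
      ∃ (b a : ℝ) (x' : EuclideanSpace ℝ (Fin 3)), 0 ≤ b ∧ 0 ≤ a ∧
        ⟪n₁, x'⟫ = 0 ∧ ⟪e₂, x'⟫ = 0 ∧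
        x = b • f (π/2 - π/n) + a • f (π/2) + x' := by
    intro x h1 h2
    have hc1 : ⟪n₁, x⟫ = ⟪x, n₁⟫ := real_inner_comm _ _
    have hc2 : ⟪n₂, x⟫ = ⟪x, n₂⟫ := real_inner_comm _ _
    have hrel : ⟪x, n₂⟫ = -c' * ⟪x, n₁⟫ + s' * ⟪e₂, x⟫ := by
      rw [← hc2, hn₂e, inner_add_left, real_inner_smul_left, real_inner_smul_left, hc1]
    refine ⟨⟪x, n₁⟫ / s', ⟪x, n₂⟫ / s',
      x - (⟪x, n₁⟫ / s') • f (π/2 - π/n) - (⟪x, n₂⟫ / s') • f (π/2),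
      div_nonneg h1 hs'pos.le, div_nonneg h2 hs'pos.le, ?_, ?_, by module⟩
    · rw [inner_sub_right, inner_sub_right, real_inner_smul_right, real_inner_smul_right,
        hip1, hip1, Real.cos_pi_div_two, Real.cos_pi_div_two_sub, ← hs'def, hc1]
      field_simp
      ring
    · rw [inner_sub_right, inner_sub_right, real_inner_smul_right, real_inner_smul_right,
        hipe, hipe, Real.sin_pi_div_two, Real.sin_pi_div_two_sub, ← hc'def]
      rw [hrel]
      field_simp
      ring
  -- the central inequality
  have hkey : ∀ g : EuclideanSpace ℝ (Fin 3) ≃ₗᵢ[ℝ] EuclideanSpace ℝ (Fin 3),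
      ((∀ z, ⟪n₁, z⟫ = 0 → ⟪e₂, z⟫ = 0 → g z = z) ∧
      (∃ k : ℤ, (∀ θ, g (f θ) = f (θ + 2*k*(π/n))) ∨
        (∀ θ, g (f θ) = f (2*k*(π/n) + π - θ)))) → ∀ x, 0 ≤ ⟪x, n₁⟫ → 0 ≤ ⟪x, n₂⟫ → ∀ y, 0 ≤ ⟪y, n₁⟫ → 0 ≤ ⟪y, n₂⟫ →
      ⟪g x, y⟫ ≤ ⟪x, y⟫ := by
    rintro g ⟨hgfix, k, hk⟩ x hx1 hx2 y hy1 hy2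
    obtain ⟨bx, ax, x', hbx, hax, hx'1, hx'2, hxeq⟩ := hBdec x hx1 hx2
    obtain ⟨by', ay, y', hby, hay, hy'1, hy'2, hyeq⟩ := hBdec y hy1 hy2
    have hgx' : g x' = x' := hgfix x' hx'1 hx'2
    have hyin : ∀ θ, ⟪f θ, y⟫ = by' * Real.cos (θ - (π/2 - π/n)) + ay * Real.cos (θ - π/2) := by
      intro θ
      rw [hyeq, inner_add_right, inner_add_right, real_inner_smul_right, real_inner_smul_right,
        hfin, hfin, hforth θ y' hy'1 hy'2]
      ring
    -- pairwise comparison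
    have hvle : ∀ (a : ℤ), a = 0 ∨ a = 1 →
        ⟪g (f (π/2 - (a:ℝ)*(π/n))), y⟫ ≤ ⟪f (π/2 - (a:ℝ)*(π/n)), y⟫ := by
      intro a ha
      rcases hk with hrot | hrfl
      · rw [hrot, hyin, hyin]
        have t1 : Real.cos (π/2 - (a:ℝ)*(π/n) + 2*k*(π/n) - (π/2 - π/n)) ≤
            Real.cos (π/2 - (a:ℝ)*(π/n) - (π/2 - π/n)) := by
          rw [show π/2 - (a:ℝ)*(π/n) + 2*k*(π/n) - (π/2 - π/n)
              = ((1 - a + 2*k : ℤ):ℝ)*(π/n) by push_cast; ring]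
          rw [show π/2 - (a:ℝ)*(π/n) - (π/2 - π/n) = ((1 - a : ℤ):ℝ)*(π/n) by push_cast; ring]
          exact keyL n hn2 (1-a) (1-a+2*k) (by omega) (by omega)
        have t2 : Real.cos (π/2 - (a:ℝ)*(π/n) + 2*k*(π/n) - π/2) ≤
            Real.cos (π/2 - (a:ℝ)*(π/n) - π/2) := by
          rw [show π/2 - (a:ℝ)*(π/n) + 2*k*(π/n) - π/2 = ((-a + 2*k : ℤ):ℝ)*(π/n) by
            push_cast; ring]
          rw [show π/2 - (a:ℝ)*(π/n) - π/2 = ((-a : ℤ):ℝ)*(π/n) by push_cast; ring]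
          exact keyL n hn2 (-a) (-a+2*k) (by omega) (by omega)
        nlinarith [mul_le_mul_of_nonneg_left t1 hby, mul_le_mul_of_nonneg_left t2 hay]
      · rw [hrfl, hyin, hyin]
        have t1 : Real.cos (2*k*(π/n) + π - (π/2 - (a:ℝ)*(π/n)) - (π/2 - π/n)) ≤
            Real.cos (π/2 - (a:ℝ)*(π/n) - (π/2 - π/n)) := by
          rw [show 2*(k:ℝ)*(π/n) + π - (π/2 - (a:ℝ)*(π/n)) - (π/2 - π/n)
              = ((2*k + a + 1 : ℤ):ℝ)*(π/n) by push_cast; ring]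
          rw [show π/2 - (a:ℝ)*(π/n) - (π/2 - π/n) = ((1 - a : ℤ):ℝ)*(π/n) by push_cast; ring]
          exact keyL n hn2 (1-a) (2*k+a+1) (by omega) (by omega)
        have t2 : Real.cos (2*k*(π/n) + π - (π/2 - (a:ℝ)*(π/n)) - π/2) ≤
            Real.cos (π/2 - (a:ℝ)*(π/n) - π/2) := by
          rw [show 2*(k:ℝ)*(π/n) + π - (π/2 - (a:ℝ)*(π/n)) - π/2
              = ((2*k + a : ℤ):ℝ)*(π/n) by push_cast; ring]
          rw [show π/2 - (a:ℝ)*(π/n) - π/2 = ((-a : ℤ):ℝ)*(π/n) by push_cast; ring]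
          exact keyL n hn2 (-a) (2*k+a) (by omega) (by omega)
        nlinarith [mul_le_mul_of_nonneg_left t1 hby, mul_le_mul_of_nonneg_left t2 hay]
    have hv1 := hvle 1 (Or.inr rfl)
    have hv0 := hvle 0 (Or.inl rfl)
    rw [show ((1:ℤ):ℝ)*(π/n) = π/n by push_cast; ring] at hv1
    rw [show π/2 - ((0:ℤ):ℝ)*(π/n) = π/2 by push_cast; ring] at hv0
    have hgxy : ⟪g x, y⟫ = bx * ⟪g (f (π/2 - π/n)), y⟫ + ax * ⟪g (f (π/2)), y⟫ + ⟪x', y⟫ := by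
      rw [hxeq, map_add, map_add, map_smul, map_smul, hgx', inner_add_left, inner_add_left,
        real_inner_smul_left, real_inner_smul_left]
    have hxy : ⟪x, y⟫ = bx * ⟪f (π/2 - π/n), y⟫ + ax * ⟪f (π/2), y⟫ + ⟪x', y⟫ := by
      rw [hxeq, inner_add_left, inner_add_left, real_inner_smul_left, real_inner_smul_left]
    rw [hgxy, hxy]
    have := mul_le_mul_of_nonneg_left hv1 hbx
    have := mul_le_mul_of_nonneg_left hv0 hax
    linarith
  -- conclusion
  intro x hx y hy g hg
  have hP := hPmain g hg
  have hip := hkey g hP x hx.1 hx.2 y hy.1 hy.2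
  have hnm : ‖g x‖ = ‖x‖ := g.norm_map x
  rw [dist_eq_norm, dist_eq_norm]
  have e1 : ‖x - y‖ ^ 2 = ‖x‖ ^ 2 - 2 * ⟪x, y⟫ + ‖y‖ ^ 2 := norm_sub_sq_real x y
  have e2 : ‖g x - y‖ ^ 2 = ‖g x‖ ^ 2 - 2 * ⟪g x, y⟫ + ‖y‖ ^ 2 := norm_sub_sq_real _ y
  have hnm2 : ‖g x‖ ^ 2 = ‖x‖ ^ 2 := by rw [hnm]
  have hsq : ‖x - y‖ ^ 2 ≤ ‖g x - y‖ ^ 2 := by rw [e1, e2, hnm2]; linarith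
  have := Real.sqrt_le_sqrt hsq
  rwa [Real.sqrt_sq (norm_nonneg _), Real.sqrt_sq (norm_nonneg _)] at this
end
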